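/- arXiv:2404.04549 — 2 statements merged into one kernel-verified Lean document; each statement's English description precedes it below -/
import Mathlib

section
/- Let Φ=(G,W,D) and Φ̃=(G,W̃,D̃) be two positive SNNs on the same network graph G, and suppose there exists b>0 such that every synaptic weight of Φ and of Φ̃ is at least b. Let L be the graph depth of G. Then for every t ∈ ℝ^{d_in}: ‖R(Φ)(t) − R(Φ̃)(t)‖_{ℓ∞} ≤ L · (1 + 1/b²) · ‖Φ − Φ̃‖_{ℓ∞}. -/
open scoped BigOperators

noncomputable section

/-- The ReLU function. -/
def relu (t : ℝ) : ℝ := max t 0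

/-- A network graph: a finite directed acyclic graph without isolated nodes. -/
structure NetworkGraph (V : Type) [Fintype V] [DecidableEq V] where
  E : Finset (V × V)
  acyclic : WellFounded (fun u v : V => (u, v) ∈ E)
  noIsolated : ∀ v : V, (∃ u, (u, v) ∈ E) ∨ (∃ u, (v, u) ∈ E)

variable {V : Type} [Fintype V] [DecidableEq V]

/-- Input nodes: nodes with no incoming edges. -/
def NetworkGraph.Vin (G : NetworkGraph V) : Set V := {v | ∀ u, (u, v) ∉ G.E}

/-- Output nodes: nodes with no outgoing edges. -/
def NetworkGraph.Vout (G : NetworkGraph V) : Set V := {v | ∀ u, (v, u) ∉ G.E}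

/-- There exists a directed path with `n` edges in `G`. -/
def NetworkGraph.HasPathLen (G : NetworkGraph V) (n : ℕ) : Prop :=
  ∃ p : Fin (n + 1) → V, ∀ i : Fin n, (p i.castSucc, p i.succ) ∈ G.E

/-- The graph depth (length of the longest directed path) of `G` equals `L`. -/
def NetworkGraph.DepthEq (G : NetworkGraph V) (L : ℕ) : Prop :=
  G.HasPathLen L ∧ ∀ n : ℕ, G.HasPathLen n → n ≤ L

/-- The potential of node `v` at time `s`, given presynaptic spike times `t`,
weights `w` and delays `d`. -/
def potential (G : NetworkGraph V) (w d : V × V → ℝ) (t : V → ℝ) (v : V) (s : ℝ) : ℝ :=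
  ∑ u ∈ Finset.univ.filter (fun u => (u, v) ∈ G.E), w (u, v) * relu (s - t u - d (u, v))

/-- `t` is a consistent assignment of spike times extending the input spike times `tin`:
on input nodes it agrees with `tin`, and at every non-input node `v` the spike time `t v`
is the minimum (which exists) of the set of times at which the potential reaches `1`. -/
def IsSpikeMap (G : NetworkGraph V) (w d : V × V → ℝ) (tin : V → ℝ) (t : V → ℝ) : Prop :=
  (∀ v ∈ G.Vin, t v = tin v) ∧
  ∀ v : V, v ∉ G.Vin → IsLeast {s : ℝ | potential G w d t v s = 1} (t v)

open Classical in
/-- The spike-time assignment determined by the input spike times `tin` (via choice). -/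
def spikeMap (G : NetworkGraph V) (w d : V × V → ℝ) (tin : V → ℝ) : V → ℝ :=
  if h : ∃ t, IsSpikeMap G w d tin t then h.choose else fun _ => 0

/-- Realization of a (positive) SNN, given enumerations of input and output nodes. -/
def snnReal (G : NetworkGraph V) (w d : V × V → ℝ) {din dout : ℕ}
    (ein : Fin din → V) (eout : Fin dout → V) (x : Fin din → ℝ) : Fin dout → ℝ :=
  fun j => spikeMap G w d (Function.extend ein x (fun _ => 0)) (eout j)

/-- Frobenius norm of a real matrix. -/
def frobNorm {m n : ℕ} (A : Matrix (Fin m) (Fin n) ℝ) : ℝ :=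
  Real.sqrt (∑ i, ∑ j, (A i j) ^ 2)

/-- Realization of an affine SNN: affine encoder, positive SNN, affine decoder. -/
def affineReal (G : NetworkGraph V) (w d : V × V → ℝ) {din dout d0 d1 : ℕ}
    (ein : Fin din → V) (eout : Fin dout → V)
    (Win : Matrix (Fin din) (Fin d0) ℝ) (bin : Fin din → ℝ)
    (Wout : Matrix (Fin d1) (Fin dout) ℝ) (bout : Fin d1 → ℝ)
    (x : Fin d0 → ℝ) : Fin d1 → ℝ :=
  Wout.mulVec (snnReal G w d ein eout (Win.mulVec x + bin)) + bout

/-- ℓ∞ distance of the parameters (weights and delays) of two SNNs on the same graph. -/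
def paramDist (G : NetworkGraph V) (w d w' d' : V × V → ℝ) : ℝ :=
  sSup ((fun e => max |w e - w' e| |d e - d' e|) '' (G.E : Set (V × V)))

/-- An affine spiking neural network with input dimension `d0` and output dimension `d1`:
a positive SNN together with enumerations of its input/output nodes and an affine
encoder/decoder pair. -/
structure AffSNN (d0 d1 : ℕ) where
  n : ℕ
  din : ℕ
  dout : ℕ
  G : NetworkGraph (Fin n)
  w : Fin n × Fin n → ℝ
  dl : Fin n × Fin n → ℝ
  ein : Fin din → Fin n
  eout : Fin dout → Fin n
  Win : Matrix (Fin din) (Fin d0) ℝ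
  bin : Fin din → ℝ
  Wout : Matrix (Fin d1) (Fin dout) ℝ
  bout : Fin d1 → ℝ
  w_pos : ∀ e ∈ G.E, 0 < w e
  dl_nonneg : ∀ e ∈ G.E, 0 ≤ dl e
  ein_inj : Function.Injective ein
  ein_range : Set.range ein = G.Vin
  eout_inj : Function.Injective eout
  eout_range : Set.range eout = G.Vout

/-- Realization of an affine SNN. -/
def AffSNN.real {d0 d1 : ℕ} (Ψ : AffSNN d0 d1) : (Fin d0 → ℝ) → Fin d1 → ℝ :=
  affineReal Ψ.G Ψ.w Ψ.dl Ψ.ein Ψ.eout Ψ.Win Ψ.bin Ψ.Wout Ψ.bout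

/-- Size of an affine SNN: the number of nonzero scalar entries of
`(W, D, W_in, W_out, b_in, b_out)`. -/
def AffSNN.size {d0 d1 : ℕ} (Ψ : AffSNN d0 d1) : ℕ :=
  {e | e ∈ Ψ.G.E ∧ Ψ.w e ≠ 0}.ncard + {e | e ∈ Ψ.G.E ∧ Ψ.dl e ≠ 0}.ncard
    + {p : Fin Ψ.din × Fin d0 | Ψ.Win p.1 p.2 ≠ 0}.ncard
    + {p : Fin d1 × Fin Ψ.dout | Ψ.Wout p.1 p.2 ≠ 0}.ncard
    + {i : Fin Ψ.din | Ψ.bin i ≠ 0}.ncard + {i : Fin d1 | Ψ.bout i ≠ 0}.ncard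

/-- All scalar weights of the affine SNN are bounded above in absolute value by `C`. -/
def AffSNN.weightsBddAbove {d0 d1 : ℕ} (Ψ : AffSNN d0 d1) (C : ℝ) : Prop :=
  (∀ e ∈ Ψ.G.E, |Ψ.w e| ≤ C) ∧ (∀ e ∈ Ψ.G.E, |Ψ.dl e| ≤ C) ∧
  (∀ i j, |Ψ.Win i j| ≤ C) ∧ (∀ i, |Ψ.bin i| ≤ C) ∧
  (∀ i j, |Ψ.Wout i j| ≤ C) ∧ (∀ i, |Ψ.bout i| ≤ C)

/-- All synaptic weights of the affine SNN are bounded below by `c`. -/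
def AffSNN.synBddBelow {d0 d1 : ℕ} (Ψ : AffSNN d0 d1) (c : ℝ) : Prop :=
  ∀ e ∈ Ψ.G.E, c ≤ Ψ.w e

/-- Clipping to the interval `[0,1]`. -/
def clip01 (y : ℝ) : ℝ := max 0 (min 1 y)

/-- The hypothesis class of `[0,1]`-clipped realizations of affine SNNs on a fixed
network graph with parameters bounded as in `P*_SNN(G, d⃗; b, B)` (with `d1 = 1`). -/
def clippedClass (G : NetworkGraph V) {din dout : ℕ} (ein : Fin din → V) (eout : Fin dout → V)
    (b B : ℝ) (d0 : ℕ) : Set ((Fin d0 → ℝ) → ℝ) :=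
  { f | ∃ (Win : Matrix (Fin din) (Fin d0) ℝ) (bin : Fin din → ℝ)
        (w dl : V × V → ℝ) (Wout : Matrix (Fin 1) (Fin dout) ℝ) (bout : Fin 1 → ℝ),
      (∀ i j, Win i j ∈ Set.Icc (-B) B) ∧ (∀ i, bin i ∈ Set.Icc (-B) B) ∧
      (∀ e ∈ G.E, w e ∈ Set.Icc b B) ∧ (∀ e ∈ G.E, dl e ∈ Set.Icc 0 B) ∧
      (∀ i j, Wout i j ∈ Set.Icc (-B) B) ∧ (∀ i, bout i ∈ Set.Icc (-B) B) ∧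
      f = fun x => clip01 (affineReal G w dl ein eout Win bin Wout bout x 0) }

/-- The Lipschitz constant `L*` from the covering-number estimate. -/
def Lstar (d0 din dout L : ℕ) (b B : ℝ) : ℝ :=
  (dout : ℝ) * (2 * Real.sqrt din * d0 * B + B * L * (1 + 1 / b ^ 2)
    + 2 * B + L * (1 / b + B)) + 1

/-- A regular triangulation of a compact set `Ω ⊆ ℝ^{d0}`, with simplices recorded by
their vertex sets. -/
structure RegTriangulation (d0 : ℕ) (Ω : Set (Fin d0 → ℝ)) where
  nodes : Finset (Fin d0 → ℝ)
  faces : Finset (Finset (Fin d0 → ℝ))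
  nodes_sub : (nodes : Set (Fin d0 → ℝ)) ⊆ Ω
  card_face : ∀ S ∈ faces, S.card = d0 + 1
  indep : ∀ S ∈ faces, AffineIndependent ℝ ((↑) : {x // x ∈ S} → (Fin d0 → ℝ))
  face_nodes : ∀ S ∈ faces,
    (nodes : Set (Fin d0 → ℝ)) ∩ convexHull ℝ (S : Set (Fin d0 → ℝ)) = (S : Set (Fin d0 → ℝ))
  cover : Ω = ⋃ S ∈ faces, convexHull ℝ (S : Set (Fin d0 → ℝ))
  inter : ∀ S ∈ faces, ∀ S' ∈ faces,
    convexHull ℝ (S : Set (Fin d0 → ℝ)) ∩ convexHull ℝ (S' : Set (Fin d0 → ℝ))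
      = convexHull ℝ ((S ∩ S' : Finset (Fin d0 → ℝ)) : Set (Fin d0 → ℝ))

/-- Euclidean distance on `ℝ^{d0}` (realized as `Fin d0 → ℝ`). -/
def eudist {d0 : ℕ} (x y : Fin d0 → ℝ) : ℝ := Real.sqrt (∑ i, (x i - y i) ^ 2)

/-- Minimal mesh size: the minimal distance between two distinct nodes of a simplex. -/
def hmin {d0 : ℕ} {Ω : Set (Fin d0 → ℝ)} (T : RegTriangulation d0 Ω) : ℝ :=
  sInf { r | ∃ S ∈ T.faces, ∃ x ∈ S, ∃ y ∈ S, x ≠ y ∧ r = eudist x y }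

/-- Maximal mesh size: the maximal distance between two nodes of a simplex. -/
def hmax {d0 : ℕ} {Ω : Set (Fin d0 → ℝ)} (T : RegTriangulation d0 Ω) : ℝ :=
  sSup { r | ∃ S ∈ T.faces, ∃ x ∈ S, ∃ y ∈ S, r = eudist x y }

/-- `f` belongs to the linear finite element space `V_T`: it is continuous on `Ω` and
affine on each simplex of `T`. -/
def PiecewiseAffineOn {d0 : ℕ} {Ω : Set (Fin d0 → ℝ)} (T : RegTriangulation d0 Ω)
    (f : (Fin d0 → ℝ) → ℝ) : Prop :=
  ContinuousOn f Ω ∧ ∀ S ∈ T.faces, ∃ (a : Fin d0 → ℝ) (c : ℝ),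
    ∀ x ∈ convexHull ℝ (S : Set (Fin d0 → ℝ)), f x = ∑ i, a i * x i + c

/-- Admissibility of a compact domain: existence of quasi-uniform triangulations. -/
def Admissible (d0 : ℕ) (Ω : Set (Fin d0 → ℝ)) : Prop :=
  ∃ C1 C2 c2 : ℝ, 0 < C1 ∧ 0 < C2 ∧ 0 < c2 ∧
    ∀ N : ℕ, 0 < N → ∃ T : RegTriangulation d0 Ω,
      (T.faces.card : ℝ) ≤ C1 * N ∧
      c2 * (N : ℝ) ^ (-(1 : ℝ) / d0) ≤ hmin T ∧
      hmin T ≤ hmax T ∧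
      hmax T ≤ C2 * (N : ℝ) ^ (-(1 : ℝ) / d0)

/-- The `W^{s,∞}(Ω)` norm (for `C^s` functions): supremum over `Ω` of the norms of the
iterated derivatives of order at most `s`. -/
def sobNorm {d0 : ℕ} (s : ℕ) (Ω : Set (Fin d0 → ℝ)) (f : (Fin d0 → ℝ) → ℝ) : ℝ :=
  sSup { r | ∃ k ≤ s, ∃ x ∈ Ω, r = ‖iteratedFDeriv ℝ k f x‖ }

/-- The `L^∞(Ω)` norm. -/
def supNormOn {d0 : ℕ} (Ω : Set (Fin d0 → ℝ)) (f : (Fin d0 → ℝ) → ℝ) : ℝ :=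
  sSup ((fun x => |f x|) '' Ω)

/-- The Barron class `Γ_K`. -/
def BarronClass (d0 : ℕ) (K : ℝ) (f : (Fin d0 → ℝ) → ℝ) : Prop :=
  MeasureTheory.LocallyIntegrable f MeasureTheory.volume ∧
  ∃ g : (Fin d0 → ℝ) → ℂ, Measurable g ∧
    (∀ x, (f x : ℂ) = ∫ ξ, Complex.exp (Complex.I * ((∑ i, x i * ξ i : ℝ) : ℂ)) * g ξ) ∧
    (∫ ξ, eudist ξ 0 * ‖g ξ‖) ≤ K

end

/-!
Let `t` and `t'` be spike-time maps of the two networks for the same input, and let `ε` be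
the parameter distance. If at a node `v` every presynaptic spike of `t'` is at most `δ` later
than that of `t`, then the potential of the second network at time `t v + δ + (1 + 1/b²) ε`
dominates the potential of the first at `t v`, which is `1`. Indeed, an active term `w x` of the
latter satisfies `x ≤ 1/b` because `b x ≤ w x ≤ 1`, so replacing `w` by `w'` costs at most
`ε / b`, which the extra time `ε / b²` recovers since `w' ≥ b`; replacing the delay costs at
most `ε`. Hence `t' v ≤ t v + (1 + 1/b²) ε` per edge along any path into `v`, paths have length
at most `L`, and exchanging the networks gives the two-sided bound. Uniqueness of spike maps is
never needed, so the choice in `spikeMap` is harmless.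
-/

namespace NetworkGraph

variable {V : Type} [Fintype V] [DecidableEq V] (G : NetworkGraph V)

def HasPathLenTo (v : V) (n : ℕ) : Prop :=
  ∃ p : Fin (n + 1) → V, (∀ i : Fin n, (p i.castSucc, p i.succ) ∈ G.E) ∧ p (Fin.last n) = v

lemma hasPathLenTo_zero (v : V) : G.HasPathLenTo v 0 :=
  ⟨fun _ => v, fun i => i.elim0, rfl⟩

variable {G}

lemma HasPathLenTo.snoc {u v : V} {n : ℕ} (h : G.HasPathLenTo u n) (huv : (u, v) ∈ G.E) :
    G.HasPathLenTo v (n + 1) := by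
  obtain ⟨p, hp, rfl⟩ := h
  refine ⟨Fin.snoc p v, fun i => ?_, Fin.snoc_last _ _⟩
  induction i using Fin.lastCases with
  | last => simpa using huv
  | cast j => rw [Fin.succ_castSucc, Fin.snoc_castSucc, Fin.snoc_castSucc]; exact hp j

lemma HasPathLenTo.le_of_depthEq {v : V} {n L : ℕ} (h : G.HasPathLenTo v n)
    (hL : G.DepthEq L) : n ≤ L :=
  hL.2 n (h.imp fun _ hp => hp.1)

end NetworkGraph

lemma relu_nonneg (x : ℝ) : 0 ≤ relu x := le_max_right _ _

section Potential

variable {V : Type} [Fintype V] [DecidableEq V] (G : NetworkGraph V) (w d : V × V → ℝ)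
  (t : V → ℝ) (v : V)

lemma continuous_potential : Continuous (potential G w d t v) := by
  unfold potential relu
  fun_prop

lemma potential_congr {t t' : V → ℝ} (h : ∀ u, (u, v) ∈ G.E → t u = t' u) :
    potential G w d t v = potential G w d t' v := by
  funext s
  refine Finset.sum_congr rfl fun u hu => ?_
  rw [h u (Finset.mem_filter.mp hu).2]

lemma exists_forall_le_potential_eq_zero : ∃ s₀, ∀ s ≤ s₀, potential G w d t v s = 0 := by
  refine ⟨⨅ u, t u + d (u, v), fun s hs => Finset.sum_eq_zero fun u _ => ?_⟩
  have hsu : s ≤ t u + d (u, v) := hs.trans (ciInf_le (Set.finite_range _).bddBelow u)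
  rw [relu, max_eq_right (by linarith), mul_zero]

lemma term_le_potential (hw : ∀ e ∈ G.E, 0 ≤ w e) {u : V} (hu : (u, v) ∈ G.E) (s : ℝ) :
    w (u, v) * relu (s - t u - d (u, v)) ≤ potential G w d t v s :=
  Finset.single_le_sum (f := fun u => w (u, v) * relu (s - t u - d (u, v)))
    (fun _ hx => mul_nonneg (hw _ (Finset.mem_filter.mp hx).2) (relu_nonneg _))
    (Finset.mem_filter.mpr ⟨Finset.mem_univ u, hu⟩)

variable {G w d t v}

lemma exists_le_potential_eq_one {τ : ℝ} (hτ : 1 ≤ potential G w d t v τ) :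
    ∃ s ≤ τ, potential G w d t v s = 1 := by
  obtain ⟨s₀, hs₀⟩ := exists_forall_le_potential_eq_zero G w d t v
  have hmem : (1 : ℝ) ∈ Set.Icc (potential G w d t v (min s₀ τ)) (potential G w d t v τ) := by
    rw [hs₀ _ (min_le_left _ _)]
    exact ⟨zero_le_one, hτ⟩
  obtain ⟨s, hs, hs1⟩ := intermediate_value_Icc (min_le_right s₀ τ)
    (continuous_potential G w d t v).continuousOn hmem
  exact ⟨s, hs.2, hs1⟩

lemma exists_isLeast_potential_eq_one (hw : ∀ e ∈ G.E, 0 < w e) (hv : v ∉ G.Vin) :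
    ∃ s, IsLeast {s | potential G w d t v s = 1} s := by
  obtain ⟨u, hu⟩ : ∃ u, (u, v) ∈ G.E := by simpa [NetworkGraph.Vin] using hv
  have hreach : 1 ≤ potential G w d t v (t u + d (u, v) + 1 / w (u, v)) := by
    refine (le_of_eq ?_).trans (term_le_potential G w d t v (fun e he => (hw e he).le) hu _)
    rw [show t u + d (u, v) + 1 / w (u, v) - t u - d (u, v) = 1 / w (u, v) by ring, relu,
      max_eq_left (one_div_pos.mpr (hw _ hu)).le, mul_one_div_cancel (hw _ hu).ne']
  obtain ⟨s, -, hs⟩ := exists_le_potential_eq_one hreach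
  obtain ⟨s₀, hs₀⟩ := exists_forall_le_potential_eq_zero G w d t v
  have hbdd : BddBelow {s | potential G w d t v s = 1} := by
    refine ⟨s₀, fun s hs => ?_⟩
    by_contra! h
    exact one_ne_zero (hs.symm.trans (hs₀ s h.le))
  have hclosed : IsClosed {s | potential G w d t v s = 1} :=
    isClosed_eq (continuous_potential G w d t v) continuous_const
  exact ⟨_, hclosed.csInf_mem ⟨s, hs⟩ hbdd, fun _ => csInf_le hbdd⟩

end Potential

section SpikeMap

variable {V : Type} [Fintype V] [DecidableEq V] (G : NetworkGraph V) (w d : V × V → ℝ)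
  (tin : V → ℝ)

open Classical in
noncomputable def spikeMapRec : V → ℝ :=
  G.acyclic.fix fun v ih => if v ∈ G.Vin then tin v else
    sInf {s | potential G w d (fun u => if h : (u, v) ∈ G.E then ih u h else 0) v s = 1}

open Classical in
lemma spikeMapRec_apply (v : V) : spikeMapRec G w d tin v =
    if v ∈ G.Vin then tin v else sInf {s | potential G w d (spikeMapRec G w d tin) v s = 1} := by
  rw [spikeMapRec, WellFounded.fix_eq, ← spikeMapRec]
  dsimp only
  rw [potential_congr G w d v (t' := spikeMapRec G w d tin) fun u hu => dif_pos hu]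

variable {w}

lemma isSpikeMap_spikeMapRec (hw : ∀ e ∈ G.E, 0 < w e) :
    IsSpikeMap G w d tin (spikeMapRec G w d tin) := by
  refine ⟨fun v hv => by rw [spikeMapRec_apply, if_pos hv], fun v hv => ?_⟩
  obtain ⟨m, hm⟩ := exists_isLeast_potential_eq_one (d := d) (t := spikeMapRec G w d tin) hw hv
  rwa [spikeMapRec_apply, if_neg hv, hm.csInf_eq]

lemma isSpikeMap_spikeMap (hw : ∀ e ∈ G.E, 0 < w e) :
    IsSpikeMap G w d tin (spikeMap G w d tin) := by
  have h : ∃ t, IsSpikeMap G w d tin t := ⟨_, isSpikeMap_spikeMapRec G d tin hw⟩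
  rw [spikeMap, dif_pos h]
  exact h.choose_spec

end SpikeMap

lemma mul_relu_le_mul_relu_of_add_div_sq_le {b ε w w' x y : ℝ} (hb : 0 < b) (hε : 0 ≤ ε)
    (hw : b ≤ w) (hw' : b ≤ w') (hww' : w - w' ≤ ε) (hwx : w * relu x ≤ 1)
    (hxy : x + ε / b ^ 2 ≤ y) : w * relu x ≤ w' * relu y := by
  rcases le_or_gt x 0 with hx | hx
  · rw [relu, max_eq_right hx, mul_zero]
    exact mul_nonneg (hb.le.trans hw') (relu_nonneg y)
  have hy : 0 < y := by linarith [show 0 ≤ ε / b ^ 2 by positivity]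
  rw [relu, max_eq_left hx.le] at hwx ⊢
  rw [relu, max_eq_left hy.le]
  have hxb : x ≤ 1 / b := by rw [le_div_iff₀ hb]; nlinarith
  calc w * x = w' * x + (w - w') * x := by ring
    _ ≤ w' * x + ε * (1 / b) := by gcongr
    _ = w' * x + b * (ε / b ^ 2) := by field_simp
    _ ≤ w' * x + w' * (ε / b ^ 2) := by gcongr
    _ = w' * (x + ε / b ^ 2) := by ring
    _ ≤ w' * y := by gcongr; linarith

section Perturbation

variable {V : Type} [Fintype V] [DecidableEq V] {G : NetworkGraph V} {w d w' d' : V × V → ℝ}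
  {b ε : ℝ}

lemma spike_le_add_of_forall_pred_le {t t' : V → ℝ} {v : V} {δ : ℝ}
    (ht : potential G w d t v (t v) = 1)
    (ht' : t' v ∈ lowerBounds {s | potential G w' d' t' v s = 1})
    (hb : 0 < b) (hw : ∀ e ∈ G.E, b ≤ w e) (hw' : ∀ e ∈ G.E, b ≤ w' e) (hε : 0 ≤ ε)
    (hwε : ∀ e ∈ G.E, |w e - w' e| ≤ ε) (hdε : ∀ e ∈ G.E, |d e - d' e| ≤ ε)
    (hpred : ∀ u, (u, v) ∈ G.E → t' u ≤ t u + δ) :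
    t' v ≤ t v + δ + (1 + 1 / b ^ 2) * ε := by
  have hτ : 1 ≤ potential G w' d' t' v (t v + δ + (1 + 1 / b ^ 2) * ε) := by
    refine ht.symm.le.trans (Finset.sum_le_sum fun u hu => ?_)
    have he : (u, v) ∈ G.E := (Finset.mem_filter.mp hu).2
    refine mul_relu_le_mul_relu_of_add_div_sq_le hb hε (hw _ he) (hw' _ he)
      (abs_le.mp (hwε _ he)).2 ?_ ?_
    · exact ht ▸ term_le_potential G w d t v (fun e he => hb.le.trans (hw e he)) he (t v)
    · have hd := (abs_le.mp (hdε _ he)).1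
      have hC : (1 + 1 / b ^ 2) * ε = ε + ε / b ^ 2 := by ring
      linarith [hpred u he]
  obtain ⟨s, hs, hs1⟩ := exists_le_potential_eq_one hτ
  exact (ht' hs1).trans hs

lemma IsSpikeMap.le_add_mul_of_forall_hasPathLenTo_le {tin t t' : V → ℝ}
    (ht : IsSpikeMap G w d tin t) (ht' : IsSpikeMap G w' d' tin t')
    (hb : 0 < b) (hw : ∀ e ∈ G.E, b ≤ w e) (hw' : ∀ e ∈ G.E, b ≤ w' e) (hε : 0 ≤ ε)
    (hwε : ∀ e ∈ G.E, |w e - w' e| ≤ ε) (hdε : ∀ e ∈ G.E, |d e - d' e| ≤ ε) (k : ℕ) :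
    ∀ v, (∀ n, G.HasPathLenTo v n → n ≤ k) → t' v ≤ t v + k * ((1 + 1 / b ^ 2) * ε) := by
  induction k with
  | zero =>
    intro v hv
    have hvin : v ∈ G.Vin := fun u hu => absurd (hv 1 ((G.hasPathLenTo_zero u).snoc hu)) (by omega)
    simp [ht.1 v hvin, ht'.1 v hvin]
  | succ k ih =>
    intro v hv
    by_cases hvin : v ∈ G.Vin
    · have : 0 ≤ ((k + 1 : ℕ) : ℝ) * ((1 + 1 / b ^ 2) * ε) := by positivity
      rw [ht.1 v hvin, ht'.1 v hvin]
      linarith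
    · have := spike_le_add_of_forall_pred_le (ht.2 v hvin).1 (ht'.2 v hvin).2 hb hw hw' hε hwε hdε
        fun u hu => ih u fun n hn => Nat.le_of_succ_le_succ (hv _ (hn.snoc hu))
      push_cast
      linarith

lemma IsSpikeMap.abs_sub_le {tin t t' : V → ℝ} {L : ℕ}
    (ht : IsSpikeMap G w d tin t) (ht' : IsSpikeMap G w' d' tin t')
    (hb : 0 < b) (hw : ∀ e ∈ G.E, b ≤ w e) (hw' : ∀ e ∈ G.E, b ≤ w' e) (hε : 0 ≤ ε)
    (hwε : ∀ e ∈ G.E, |w e - w' e| ≤ ε) (hdε : ∀ e ∈ G.E, |d e - d' e| ≤ ε)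
    (hL : G.DepthEq L) (v : V) :
    |t v - t' v| ≤ L * ((1 + 1 / b ^ 2) * ε) := by
  have hpaths : ∀ n, G.HasPathLenTo v n → n ≤ L := fun n hn => hn.le_of_depthEq hL
  have h₁ := ht.le_add_mul_of_forall_hasPathLenTo_le ht' hb hw hw' hε hwε hdε L v hpaths
  have h₂ := ht'.le_add_mul_of_forall_hasPathLenTo_le ht hb hw' hw hε
    (fun e he => abs_sub_comm (w e) (w' e) ▸ hwε e he)
    (fun e he => abs_sub_comm (d e) (d' e) ▸ hdε e he) L v hpaths
  rw [abs_sub_le_iff]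
  constructor <;> linarith

end Perturbation

section ParamDist

variable {V : Type} [Fintype V] [DecidableEq V] (G : NetworkGraph V) (w d w' d' : V × V → ℝ)

lemma max_abs_sub_le_paramDist {e : V × V} (he : e ∈ G.E) :
    max |w e - w' e| |d e - d' e| ≤ paramDist G w d w' d' :=
  le_csSup ((G.E.finite_toSet.image _).bddAbove) (Set.mem_image_of_mem _ he)

lemma paramDist_nonneg : 0 ≤ paramDist G w d w' d' :=
  Real.sSup_nonneg fun _ ⟨_, _, hx⟩ => hx ▸ (abs_nonneg _).trans (le_max_left _ _)

end ParamDist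

theorem statement2_general {V : Type} [Fintype V] [DecidableEq V]
    (G : NetworkGraph V) {din dout : ℕ}
    (ein : Fin din → V) (eout : Fin dout → V)
    (w d w' d' : V × V → ℝ)
    (b : ℝ) (hb : 0 < b)
    (hw : ∀ e ∈ G.E, b ≤ w e) (hw' : ∀ e ∈ G.E, b ≤ w' e)
    (L : ℕ) (hL : G.DepthEq L)
    (t : Fin din → ℝ) :
    ‖snnReal G w d ein eout t - snnReal G w' d' ein eout t‖ ≤
      (L : ℝ) * (1 + 1 / b ^ 2) * paramDist G w d w' d' := by
  set tin := Function.extend ein t fun _ => 0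
  have hε := paramDist_nonneg G w d w' d'
  have hdist (e) (he : e ∈ G.E) := max_abs_sub_le_paramDist G w d w' d' he
  refine (pi_norm_le_iff_of_nonneg (by positivity)).mpr fun j => ?_
  rw [Pi.sub_apply, Real.norm_eq_abs, mul_assoc]
  exact (isSpikeMap_spikeMap G d tin fun e he => hb.trans_le (hw e he)).abs_sub_le
    (isSpikeMap_spikeMap G d' tin fun e he => hb.trans_le (hw' e he)) hb hw hw' hε
    (fun e he => (le_max_left _ _).trans (hdist e he))
    (fun e he => (le_max_right _ _).trans (hdist e he)) hL (eout j)

/-- Proposition: Lipschitz continuity of positive SNNs in their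
parameters. For two positive SNNs on the same graph of depth `L`, with all synaptic
weights at least `b > 0`, and for every input `t`,
`‖R(Φ)(t) − R(Φ̃)(t)‖_∞ ≤ L·(1 + 1/b²)·‖Φ − Φ̃‖_∞`. -/
theorem statement2 {V : Type} [Fintype V] [DecidableEq V]
    (G : NetworkGraph V) {din dout : ℕ}
    (ein : Fin din → V) (eout : Fin dout → V)
    (hein : Function.Injective ein) (heinr : Set.range ein = G.Vin)
    (heout : Function.Injective eout) (heoutr : Set.range eout = G.Vout)
    (w d w' d' : V × V → ℝ)
    (hdnn : ∀ e ∈ G.E, 0 ≤ d e) (hdnn' : ∀ e ∈ G.E, 0 ≤ d' e)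
    (b : ℝ) (hb : 0 < b)
    (hw : ∀ e ∈ G.E, b ≤ w e) (hw' : ∀ e ∈ G.E, b ≤ w' e)
    (L : ℕ) (hL : G.DepthEq L)
    (t : Fin din → ℝ) :
    ‖snnReal G w d ein eout t - snnReal G w' d' ein eout t‖ ≤
      (L : ℝ) * (1 + 1 / b ^ 2) * paramDist G w d w' d' :=
  statement2_general G ein eout w d w' d' b hb hw hw' L hL t
end

section
/- Let d_0 ∈ ℕ and ε > 0. Let a ∈ ℝ^{d_0} and b, c, d ∈ ℝ. Then there exists an affine SNN Ψ_{a,b,c,d,ε} with realization R(Ψ_{a,b,c,d,ε}): ℝ^{d_0} → ℝ such that for all x ∈ ℝ^{d_0}: |R(Ψ_{a,b,c,d,ε})(x) − c·max{a^⊤x + b, 0} − d| ≤ |c|·ε. Moreover, Size(Ψ_{a,b,c,d,ε}) ≤ d_0 + 5, all weights in Ψ_{a,b,c,d,ε} are bounded above in absolute value by max{1/ε, ‖a‖_{ℓ∞}, |b|, |c|, |d|}, and all synaptic weights are bounded below by 1/ε. -/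
open scoped BigOperators

noncomputable section

variable {V : Type} [Fintype V] [DecidableEq V]

/-!
The network has two input neurons, which spike at `-(aᵀx + b)` and at `0`, both connected to one
output neuron with weight `1/ε` and no delay. The output potential is `1/ε` times a sum of two
ReLU ramps, so the output neuron fires at some time in `[m, m + ε]`, where
`m = min (-(aᵀx + b)) 0 = -max (aᵀx + b) 0`. Decoding the output spike time by `t ↦ -c t + d`
therefore approximates `c · max (aᵀx + b) 0 + d` up to `|c| ε`.
-/

theorem relu_of_nonpos {t : ℝ} (h : t ≤ 0) : relu t = 0 := max_eq_right h

theorem relu_of_nonneg {t : ℝ} (h : 0 ≤ t) : relu t = t := max_eq_left h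

theorem relu_mono : Monotone relu := fun _ _ h => max_le_max h le_rfl

section SpikeMap

variable {V : Type} [Fintype V] [DecidableEq V] {G : NetworkGraph V} {w d : V × V → ℝ}
  {tin : V → ℝ}

theorem IsSpikeMap.unique {t t' : V → ℝ} (ht : IsSpikeMap G w d tin t)
    (ht' : IsSpikeMap G w d tin t') : t = t' := by
  funext v
  induction v using G.acyclic.induction with
  | _ v ih =>
    by_cases hv : v ∈ G.Vin
    · rw [ht.1 v hv, ht'.1 v hv]
    · have hpot : potential G w d t v = potential G w d t' v := by
        funext s
        refine Finset.sum_congr rfl fun u hu => ?_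
        rw [ih u (Finset.mem_filter.1 hu).2]
      exact (ht.2 v hv).unique (hpot ▸ ht'.2 v hv)

theorem spikeMap_eq_of_isSpikeMap {t : V → ℝ} (ht : IsSpikeMap G w d tin t) :
    spikeMap G w d tin = t := by
  have hex : ∃ t, IsSpikeMap G w d tin t := ⟨t, ht⟩
  rw [spikeMap, dif_pos hex]
  exact hex.choose_spec.unique ht

end SpikeMap

/-- The first time at which two ReLU ramps starting at `t₁` and `t₂` together reach height `ε`. -/
def pairSpikeTime (ε t₁ t₂ : ℝ) : ℝ := min (min t₁ t₂ + ε) ((t₁ + t₂ + ε) / 2)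

theorem pairSpikeTime_comm (ε t₁ t₂ : ℝ) : pairSpikeTime ε t₁ t₂ = pairSpikeTime ε t₂ t₁ := by
  rw [pairSpikeTime, pairSpikeTime, min_comm t₁, add_comm t₁]

theorem isLeast_pairSpikeTime_of_le {ε t₁ t₂ : ℝ} (hε : 0 < ε) (h : t₁ ≤ t₂) :
    IsLeast {s | relu (s - t₁) + relu (s - t₂) = ε} (pairSpikeTime ε t₁ t₂) := by
  set T := pairSpikeTime ε t₁ t₂
  have hT : relu (T - t₁) + relu (T - t₂) = ε := by
    rcases le_total (t₁ + ε) t₂ with h' | h'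
    · have : T = t₁ + ε := by simp only [T, pairSpikeTime, min_eq_left h]; grind
      rw [this, relu_of_nonneg (by linarith), relu_of_nonpos (by linarith)]
      ring
    · have : T = (t₁ + t₂ + ε) / 2 := by simp only [T, pairSpikeTime, min_eq_left h]; grind
      rw [this, relu_of_nonneg (by linarith), relu_of_nonneg (by linarith)]
      ring
  refine ⟨hT, fun s hs => not_lt.1 fun hsT => ?_⟩
  have ht₁T : t₁ < T := by simp only [T, pairSpikeTime, min_eq_left h]; grind
  rcases le_total s t₁ with hs₁ | hs₁
  · rw [Set.mem_ofPred_eq, relu_of_nonpos (by linarith), relu_of_nonpos (by linarith)] at hs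
    linarith
  · -- past `t₁` the first ramp is strictly increasing and the second nondecreasing
    have h₁ : relu (s - t₁) < relu (T - t₁) := by
      rw [relu_of_nonneg (by linarith), relu_of_nonneg (by linarith)]
      linarith
    have h₂ : relu (s - t₂) ≤ relu (T - t₂) := relu_mono (by linarith)
    exact (hs.symm.trans_lt (hT ▸ add_lt_add_of_lt_of_le h₁ h₂)).false

theorem isLeast_pairSpikeTime {ε : ℝ} (hε : 0 < ε) (t₁ t₂ : ℝ) :
    IsLeast {s | relu (s - t₁) + relu (s - t₂) = ε} (pairSpikeTime ε t₁ t₂) := by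
  rcases le_total t₁ t₂ with h | h
  · exact isLeast_pairSpikeTime_of_le hε h
  · have hset : {s | relu (s - t₁) + relu (s - t₂) = ε}
        = {s | relu (s - t₂) + relu (s - t₁) = ε} :=
      Set.ext fun s => by simp only [Set.mem_ofPred_eq, add_comm]
    rw [hset, pairSpikeTime_comm]
    exact isLeast_pairSpikeTime_of_le hε h

theorem pairSpikeTime_mem_Icc {ε : ℝ} (hε : 0 ≤ ε) (t₁ t₂ : ℝ) :
    pairSpikeTime ε t₁ t₂ ∈ Set.Icc (min t₁ t₂) (min t₁ t₂ + ε) := by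
  have : 2 * min t₁ t₂ ≤ t₁ + t₂ := by linarith [min_le_left t₁ t₂, min_le_right t₁ t₂]
  exact ⟨le_min (by linarith) (by linarith), min_le_left _ _⟩

def mergeGraph : NetworkGraph (Fin 3) where
  E := {(0, 2), (1, 2)}
  acyclic := Subrelation.wf
    (fun {u v} h => (show ∀ u v : Fin 3, (u, v) ∈ ({(0, 2), (1, 2)} : Finset _) → u < v by
      decide) u v h) wellFounded_lt
  noIsolated := by decide

theorem mem_mergeGraph_Vin {v : Fin 3} : v ∈ mergeGraph.Vin ↔ v ≠ 2 := by
  simp only [NetworkGraph.Vin, Set.mem_ofPred_eq]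
  revert v
  decide

theorem mergeGraph_Vout : mergeGraph.Vout = {2} := by
  ext v
  simp only [NetworkGraph.Vout, Set.mem_ofPred_eq, Set.mem_singleton_iff]
  revert v
  decide

theorem potential_mergeGraph (w : ℝ) (t : Fin 3 → ℝ) (s : ℝ) :
    potential mergeGraph (fun _ => w) (fun _ => 0) t 2 s
      = w * (relu (s - t 0) + relu (s - t 1)) := by
  have hpre : Finset.univ.filter (fun u : Fin 3 => (u, (2 : Fin 3)) ∈ mergeGraph.E) = {0, 1} := by
    decide
  rw [potential, hpre, Finset.sum_pair (by decide), mul_add]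
  simp only [sub_zero]

theorem spikeMap_mergeGraph {ε : ℝ} (hε : 0 < ε) (tin : Fin 3 → ℝ) :
    spikeMap mergeGraph (fun _ => 1 / ε) (fun _ => 0) tin 2
      = pairSpikeTime ε (tin 0) (tin 1) := by
  suffices IsSpikeMap mergeGraph (fun _ => 1 / ε) (fun _ => 0) tin
      (Function.update tin 2 (pairSpikeTime ε (tin 0) (tin 1))) by
    rw [spikeMap_eq_of_isSpikeMap this, Function.update_self]
  refine ⟨fun v hv => Function.update_of_ne (mem_mergeGraph_Vin.1 hv) _ _, fun v hv => ?_⟩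
  obtain rfl : v = 2 := not_not.1 (mt mem_mergeGraph_Vin.2 hv)
  simp only [potential_mergeGraph, Function.update_self,
    Function.update_of_ne (show (0 : Fin 3) ≠ 2 by decide),
    Function.update_of_ne (show (1 : Fin 3) ≠ 2 by decide), one_div_mul_eq_div,
    div_eq_one_iff_eq hε.ne']
  exact isLeast_pairSpikeTime hε _ _

def ridgeSNN (d0 : ℕ) {ε : ℝ} (hε : 0 < ε) (a : Fin d0 → ℝ) (b c d : ℝ) : AffSNN d0 1 where
  n := 3
  din := 2
  dout := 1
  G := mergeGraph
  w := fun _ => 1 / ε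
  dl := fun _ => 0
  ein := ![0, 1]
  eout := ![2]
  Win := ![-a, 0]
  bin := ![-b, 0]
  Wout := !![-c]
  bout := ![d]
  w_pos := fun _ _ => by positivity
  dl_nonneg := fun _ _ => le_rfl
  ein_inj := by decide
  ein_range := by
    ext v
    rw [mem_mergeGraph_Vin]
    revert v
    decide
  eout_inj := Function.injective_of_subsingleton _
  eout_range := by
    rw [mergeGraph_Vout]
    exact Set.range_unique

section RidgeSNN

variable (d0 : ℕ) {ε : ℝ} (hε : 0 < ε) (a : Fin d0 → ℝ) (b c d : ℝ)

theorem ridgeSNN_real (x : Fin d0 → ℝ) :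
    (ridgeSNN d0 hε a b c d).real x 0
      = -c * pairSpikeTime ε (-(∑ i, a i * x i + b)) 0 + d := by
  have hinj : Function.Injective (![0, 1] : Fin 2 → Fin 3) := by decide
  have hextend (u v : ℝ) :
      Function.extend (![0, 1] : Fin 2 → Fin 3) ![u, v] (fun _ => 0) 0 = u ∧
      Function.extend (![0, 1] : Fin 2 → Fin 3) ![u, v] (fun _ => 0) 1 = v :=
    ⟨hinj.extend_apply _ _ 0, hinj.extend_apply _ _ 1⟩
  have htin : Matrix.mulVec ![-a, 0] x + ![-b, 0] = ![-(∑ i, a i * x i + b), 0] := by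
    ext i
    fin_cases i <;> simp [Matrix.mulVec, dotProduct]
    ring
  have hreal : (ridgeSNN d0 hε a b c d).real x 0 = -c * spikeMap mergeGraph (fun _ => 1 / ε)
      (fun _ => 0) (Function.extend ![0, 1] (Matrix.mulVec ![-a, 0] x + ![-b, 0]) fun _ => 0) 2
      + d := by
    simp only [AffSNN.real, affineReal, snnReal, ridgeSNN, Pi.add_apply, Matrix.mulVec,
      dotProduct]
    change ∑ _ : Fin 1, _ + _ = _
    rw [Fin.sum_univ_one]
    rfl
  rw [hreal, spikeMap_mergeGraph hε, htin, (hextend _ _).1, (hextend _ _).2]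

theorem ridgeSNN_real_approx (x : Fin d0 → ℝ) :
    |(ridgeSNN d0 hε a b c d).real x 0 - c * max (∑ i, a i * x i + b) 0 - d| ≤ |c| * ε := by
  set y := ∑ i, a i * x i + b
  have hmin : min (-y) 0 = -max y 0 := by rw [← min_neg_neg, neg_zero]
  obtain ⟨hlo, hhi⟩ := pairSpikeTime_mem_Icc hε.le (-y) 0
  rw [hmin] at hlo hhi
  rw [ridgeSNN_real, show ∀ T : ℝ, -c * T + d - c * max y 0 - d = -(c * (T + max y 0)) by
    intro T; ring, abs_neg, abs_mul]
  exact mul_le_mul_of_nonneg_left (abs_le.2 ⟨by linarith, by linarith⟩) (abs_nonneg c)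

theorem ridgeSNN_size_le : (ridgeSNN d0 hε a b c d).size ≤ d0 + 5 := by
  have hWin : {p : Fin 2 × Fin d0 | (![-a, 0] : Matrix _ _ ℝ) p.1 p.2 ≠ 0}.ncard ≤ d0 := by
    have hsub : {p : Fin 2 × Fin d0 | (![-a, 0] : Matrix _ _ ℝ) p.1 p.2 ≠ 0}
        ⊆ ↑(({0} : Finset (Fin 2)) ×ˢ (Finset.univ : Finset (Fin d0))) := by
      rintro ⟨i, j⟩ hij
      fin_cases i
      · simp
      · simp at hij
    refine (Set.ncard_le_ncard hsub (Finset.finite_toSet _)).trans ?_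
    rw [Set.ncard_coe_finset, Finset.card_product]
    simp
  have hbin : {i : Fin 2 | (![-b, 0] : Fin 2 → ℝ) i ≠ 0}.ncard ≤ 1 := by
    have hsub : {i : Fin 2 | (![-b, 0] : Fin 2 → ℝ) i ≠ 0} ⊆ {0} := by
      intro i hi
      fin_cases i
      · rfl
      · simp at hi
    simpa using Set.ncard_le_ncard hsub
  have hWout := Set.ncard_le_card {p : Fin 1 × Fin 1 | (!![-c] : Matrix _ _ ℝ) p.1 p.2 ≠ 0}
  have hbout := Set.ncard_le_card {i : Fin 1 | (![d] : Fin 1 → ℝ) i ≠ 0}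
  simp only [Nat.card_eq_fintype_card, Fintype.card_prod, Fintype.card_fin] at hWout hbout
  dsimp only [AffSNN.size, ridgeSNN]
  have hw : {e | e ∈ mergeGraph.E ∧ 1 / ε ≠ 0}.ncard = 2 := by
    simp only [ne_eq, one_div_ne_zero hε.ne', not_false_eq_true, and_true, Finset.setOfPred_mem,
      Set.ncard_coe_finset]
    rfl
  simp only [hw, ne_self_iff_false, and_false, Set.ofPred_false, Set.ncard_empty]
  omega

theorem ridgeSNN_weightsBddAbove {C : ℝ} (hεC : 1 / ε ≤ C) (haC : ‖a‖ ≤ C) (hbC : |b| ≤ C)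
    (hcC : |c| ≤ C) (hdC : |d| ≤ C) : (ridgeSNN d0 hε a b c d).weightsBddAbove C := by
  have h0C : |(0 : ℝ)| ≤ C := by rw [abs_zero]; exact (abs_nonneg b).trans hbC
  refine ⟨fun _ _ => ?_, fun _ _ => h0C, fun i j => ?_, fun i => ?_, fun i j => ?_,
    fun _ => ?_⟩
  · exact (abs_of_pos (one_div_pos.2 hε)).trans_le hεC
  · fin_cases i
    · simpa [ridgeSNN] using (norm_le_pi_norm a j).trans haC
    · simpa [ridgeSNN] using h0C
  · fin_cases i
    · simpa [ridgeSNN] using hbC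
    · simpa [ridgeSNN] using h0C
  · fin_cases i; fin_cases j
    simpa [ridgeSNN] using hcC
  · simpa [ridgeSNN] using hdC

end RidgeSNN

theorem statement8_general (d0 : ℕ) (ε : ℝ) (hε : 0 < ε)
    (a : Fin d0 → ℝ) (b c d : ℝ) :
    ∃ Ψ : AffSNN d0 1,
      (∀ x : Fin d0 → ℝ,
        |Ψ.real x 0 - c * max (∑ i, a i * x i + b) 0 - d| ≤ |c| * ε) ∧
      Ψ.size ≤ d0 + 5 ∧
      Ψ.weightsBddAbove (max (1 / ε) (max ‖a‖ (max |b| (max |c| |d|)))) ∧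
      Ψ.synBddBelow (1 / ε) :=
  ⟨ridgeSNN d0 hε a b c d, ridgeSNN_real_approx d0 hε a b c d, ridgeSNN_size_le d0 hε a b c d,
    ridgeSNN_weightsBddAbove d0 hε a b c d (by simp) (by simp) (by simp) (by simp) (by simp),
    fun _ _ => le_rfl⟩

/-- Lemma: approximation of a ridge function. For every
`a ∈ ℝ^{d0}`, `b, c, d ∈ ℝ` and `ε > 0` there is an affine SNN whose realization is
within `|c|·ε` of `x ↦ c·max{aᵀx + b, 0} + d` everywhere, of size at most `d0 + 5`,
all of whose weights are bounded in absolute value by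
`max{1/ε, ‖a‖_∞, |b|, |c|, |d|}`, and whose synaptic weights are at least `1/ε`. -/
theorem statement8 (d0 : ℕ) (hd0 : 0 < d0) (ε : ℝ) (hε : 0 < ε)
    (a : Fin d0 → ℝ) (b c d : ℝ) :
    ∃ Ψ : AffSNN d0 1,
      (∀ x : Fin d0 → ℝ,
        |Ψ.real x 0 - c * max (∑ i, a i * x i + b) 0 - d| ≤ |c| * ε) ∧
      Ψ.size ≤ d0 + 5 ∧
      Ψ.weightsBddAbove (max (1 / ε) (max ‖a‖ (max |b| (max |c| |d|)))) ∧
      Ψ.synBddBelow (1 / ε) :=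
  statement8_general d0 ε hε a b c d
end
end
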